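/- The pair (a,b) with a(r) = 0 and b(r) = 1/R₊(r) = √2/√(r²+1) satisfies the invariant HYM system: da/dr = -r/(2R₋²), db/dr = -r/(2R₊²), R₊²(1-b²) = R₋²(1-a²), and ab = 0, where R₊² = (r²+1)/2 and R₋² = (r²-1)/2; moreover, (a,b) = (0, -√2/√(r²+1)) is the only other solution satisfying all four conditions. -/

import Mathlib

/-! On `r > 1` we have `R₊² > R₋² > 0`, so the constraint `R₊²(1 - b²) = R₋²(1 - a²)` forbids
`b = 0`; hence `ab = 0` forces `a = 0`, and then `b² = 1 - R₋²/R₊² = 1/R₊²`. Since `b` is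
differentiable, hence continuous, on the connected set `(1, ∞)` and `1/R₊` never vanishes there,
`b` is one of `±1/R₊` throughout. Both signs solve the ODE `b' = -(r/(2R₊²)) b`. -/

/-- The invariant HYM system for SO(3)-connections on `P_Id`: the ODEs
`da/dr = -(r/(2R₋²))·a`, `db/dr = -(r/(2R₊²))·b` together with the algebraic constraints
`R₊²(1-b²) = R₋²(1-a²)` and `ab = 0`, where `R₊² = (r²+1)/2`, `R₋² = (r²-1)/2`. -/
def IsInvariantHYM (a b : ℝ → ℝ) : Prop :=
  ∀ r ∈ Set.Ioi (1 : ℝ),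
    HasDerivAt a (-(r / (2 * ((r ^ 2 - 1) / 2))) * a r) r ∧
    HasDerivAt b (-(r / (2 * ((r ^ 2 + 1) / 2))) * b r) r ∧
    ((r ^ 2 + 1) / 2) * (1 - (b r) ^ 2) = ((r ^ 2 - 1) / 2) * (1 - (a r) ^ 2) ∧
    a r * b r = 0

open Set

lemma hasDerivAt_div_sqrt_sq_add_one (c r : ℝ) :
    HasDerivAt (fun x => c / Real.sqrt (x ^ 2 + 1))
      (-(r / (r ^ 2 + 1)) * (c / Real.sqrt (r ^ 2 + 1))) r := by
  have hpos : 0 < r ^ 2 + 1 := by positivity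
  have hsqrt : HasDerivAt (fun x => Real.sqrt (x ^ 2 + 1))
      (1 / (2 * Real.sqrt (r ^ 2 + 1)) * (2 * r)) r :=
    (Real.hasDerivAt_sqrt hpos.ne').comp r (by simpa using (hasDerivAt_pow 2 r).add_const 1)
  refine ((hasDerivAt_const r c).div hsqrt (by positivity)).congr_deriv ?_
  have hsq : Real.sqrt (r ^ 2 + 1) ^ 2 = r ^ 2 + 1 := Real.sq_sqrt hpos.le
  field_simp
  rw [hsq]
  ring

lemma sq_sqrt_two_div_sqrt_sq_add_one (r : ℝ) :
    (Real.sqrt 2 / Real.sqrt (r ^ 2 + 1)) ^ 2 = 2 / (r ^ 2 + 1) := by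
  rw [div_pow, Real.sq_sqrt zero_le_two, Real.sq_sqrt (by positivity)]

lemma isInvariantHYM_zero_sqrt_two_div_sqrt :
    IsInvariantHYM (fun _ => 0) (fun r => Real.sqrt 2 / Real.sqrt (r ^ 2 + 1)) := by
  intro r _
  refine ⟨hasDerivAt_const r 0 |>.congr_deriv (mul_zero _).symm, ?_, ?_, zero_mul _⟩
  · convert hasDerivAt_div_sqrt_sq_add_one (Real.sqrt 2) r using 3
    ring
  · rw [sq_sqrt_two_div_sqrt_sq_add_one]
    field_simp
    ring

namespace IsInvariantHYM

variable {a b : ℝ → ℝ}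

lemma neg_right (h : IsInvariantHYM a b) : IsInvariantHYM a (fun r => -b r) := by
  intro r hr
  obtain ⟨ha, hb, hconstr, hab⟩ := h r hr
  refine ⟨ha, ?_, by simpa only [neg_sq] using hconstr, by rw [mul_neg, hab, neg_zero]⟩
  exact hb.neg.congr_deriv (by ring)

lemma left_eq_zero (h : IsInvariantHYM a b) {r : ℝ} (hr : r ∈ Ioi 1) : a r = 0 := by
  obtain ⟨-, -, hconstr, hab⟩ := h r hr
  refine (mul_eq_zero.mp hab).resolve_right fun hb => ?_
  have hr2 : 0 ≤ r ^ 2 - 1 := by nlinarith [mem_Ioi.mp hr]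
  rw [hb] at hconstr
  nlinarith [mul_nonneg hr2 (sq_nonneg (a r))]

lemma right_sq (h : IsInvariantHYM a b) {r : ℝ} (hr : r ∈ Ioi 1) :
    b r ^ 2 = (Real.sqrt 2 / Real.sqrt (r ^ 2 + 1)) ^ 2 := by
  have hconstr := (h r hr).2.2.1
  rw [h.left_eq_zero hr] at hconstr
  rw [sq_sqrt_two_div_sqrt_sq_add_one]
  field_simp
  linarith

lemma continuousOn_right (h : IsInvariantHYM a b) : ContinuousOn b (Ioi 1) :=
  fun r hr => (h r hr).2.1.continuousAt.continuousWithinAt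

end IsInvariantHYM

theorem stenzel_so3_hym_solutions :
    IsInvariantHYM (fun _ => 0) (fun r => Real.sqrt 2 / Real.sqrt (r ^ 2 + 1)) ∧
    IsInvariantHYM (fun _ => 0) (fun r => -(Real.sqrt 2 / Real.sqrt (r ^ 2 + 1))) ∧
    ∀ a b : ℝ → ℝ, IsInvariantHYM a b →
      (∀ r ∈ Set.Ioi (1 : ℝ), a r = 0) ∧
      ((∀ r ∈ Set.Ioi (1 : ℝ), b r = Real.sqrt 2 / Real.sqrt (r ^ 2 + 1)) ∨
        (∀ r ∈ Set.Ioi (1 : ℝ), b r = -(Real.sqrt 2 / Real.sqrt (r ^ 2 + 1)))) := by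
  refine ⟨isInvariantHYM_zero_sqrt_two_div_sqrt, isInvariantHYM_zero_sqrt_two_div_sqrt.neg_right,
    fun a b h => ⟨fun r hr => h.left_eq_zero hr, ?_⟩⟩
  have hprofile : ContinuousOn (fun r : ℝ => Real.sqrt 2 / Real.sqrt (r ^ 2 + 1)) (Ioi 1) :=
    (continuous_const.div (by fun_prop) fun r => by positivity).continuousOn
  exact isPreconnected_Ioi.eq_or_eq_neg_of_sq_eq h.continuousOn_right hprofile
    (fun r hr => h.right_sq hr) fun _ => by positivity
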